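/- arXiv:2304.03354 — 8 statements merged into one kernel-verified Lean document; each statement's English description precedes it below -/
import Mathlib

section
/- If 𝒜 is a convex family of sets, then the cylindrical dimension of 𝒜 is at most the product of the upper dimension and the dual upper dimension of 𝒜: CD(𝒜) ≤ DD(𝒜) · DDd(𝒜). -/
open Set

/-- A family of sets is convex if it is closed under set-theoretic betweenness. -/
def IsConvexFam {X : Type*} (𝒜 : Set (Set X)) : Prop :=
  ∀ S ∈ 𝒜, ∀ T ∈ 𝒜, ∀ C : Set X, S ⊆ C → C ⊆ T → C ∈ 𝒜

/-- A family is dominated if its union belongs to it. -/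
def IsDominatedFam {X : Type*} (𝒜 : Set (Set X)) : Prop := ⋃₀ 𝒜 ∈ 𝒜

/-- A family is supported if it is nonempty and its intersection belongs to it. -/
def IsSupportedFam {X : Type*} (𝒜 : Set (Set X)) : Prop := 𝒜.Nonempty ∧ ⋂₀ 𝒜 ∈ 𝒜

/-- A family is an interval if it equals `[A,B] = {C | A ⊆ C ⊆ B}` for some `A ⊆ B`. -/
def IsIntervalFam {X : Type*} (𝒜 : Set (Set X)) : Prop :=
  ∃ A B : Set X, A ⊆ B ∧ 𝒜 = Set.Icc A B

/-- `𝒢` dominates `𝒜` if there are dominated convex families `𝒟 G ⊆ 𝒜` (`G ∈ 𝒢`)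
with `⋃ G ∈ 𝒢, 𝒟 G = 𝒜` and `⋃₀ (𝒟 G) = G`. -/
def DominatesFam {X : Type*} (𝒢 𝒜 : Set (Set X)) : Prop :=
  𝒢 ⊆ 𝒜 ∧ ∃ 𝒟 : Set X → Set (Set X),
    (∀ G ∈ 𝒢, 𝒟 G ⊆ 𝒜 ∧ IsConvexFam (𝒟 G) ∧ IsDominatedFam (𝒟 G) ∧ ⋃₀ (𝒟 G) = G) ∧
    (⋃ G ∈ 𝒢, 𝒟 G) = 𝒜

/-- `𝒦` supports `𝒜` if there are supported convex families `𝒮 K ⊆ 𝒜` (`K ∈ 𝒦`)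
with `⋃ K ∈ 𝒦, 𝒮 K = 𝒜` and `⋂₀ (𝒮 K) = K`. -/
def SupportsFam {X : Type*} (𝒦 𝒜 : Set (Set X)) : Prop :=
  𝒦 ⊆ 𝒜 ∧ ∃ 𝒮 : Set X → Set (Set X),
    (∀ K ∈ 𝒦, 𝒮 K ⊆ 𝒜 ∧ IsConvexFam (𝒮 K) ∧ IsSupportedFam (𝒮 K) ∧ ⋂₀ (𝒮 K) = K) ∧
    (⋃ K ∈ 𝒦, 𝒮 K) = 𝒜

/-- The upper dimension: the minimal cardinality of a dominating subfamily. -/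
noncomputable def upperDim {X : Type*} (𝒜 : Set (Set X)) : ℕ∞ :=
  sInf {n : ℕ∞ | ∃ 𝒢 : Set (Set X), DominatesFam 𝒢 𝒜 ∧ 𝒢.encard = n}

/-- The dual upper dimension: the minimal cardinality of a supporting subfamily. -/
noncomputable def dualDim {X : Type*} (𝒜 : Set (Set X)) : ℕ∞ :=
  sInf {n : ℕ∞ | ∃ 𝒦 : Set (Set X), SupportsFam 𝒦 𝒜 ∧ 𝒦.encard = n}

/-- The cylindrical dimension: the minimal number of intervals whose union is `𝒜`. -/
noncomputable def cylDim {X : Type*} (𝒜 : Set (Set X)) : ℕ∞ :=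
  sInf {n : ℕ∞ | ∃ 𝕀 : Set (Set (Set X)),
    (∀ J ∈ 𝕀, IsIntervalFam J) ∧ ⋃₀ 𝕀 = 𝒜 ∧ 𝕀.encard = n}

open Classical in
noncomputable def chiFun {X : Type*} (A : Set X) (x : X) : Bool := decide (x ∈ A)

/-- The set-theoretic operation corresponding to a binary operation on `{0,1}`. -/
noncomputable def setOp {X : Type*} (op : Bool → Bool → Bool) (A B : Set X) : Set X :=
  {x | op (chiFun A x) (chiFun B x) = true}

/-- The tensor operation on families corresponding to a binary operation on `{0,1}`. -/
noncomputable def tensorFam {X : Type*} (op : Bool → Bool → Bool)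
    (𝒜 ℬ : Set (Set X)) : Set (Set X) :=
  Set.image2 (setOp op) 𝒜 ℬ

/-- The convex shadow of `A` in `𝒜`. -/
def convexShadow {X : Type*} (𝒜 : Set (Set X)) (A : Set X) : Set (Set X) :=
  {B | B ⊆ A ∧ Set.Icc B A ⊆ 𝒜}

/-- Domain of a relation. -/
def relDom {X Y : Type*} (R : Set (X × Y)) : Set X := {x | ∃ y, (x, y) ∈ R}

/-- Range of a relation. -/
def relRg {X Y : Type*} (R : Set (X × Y)) : Set Y := {y | ∃ x, (x, y) ∈ R}

/-- The family of (partial) functions from `X` to `Y`, as sets of pairs. -/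
def partialFunFam (X Y : Type*) : Set (Set (X × Y)) :=
  {f | ∀ x y y', (x, y) ∈ f → (x, y') ∈ f → y = y'}

/-- The family of relations on `X` with disjoint domain and range. -/
def exclFam (X : Type*) : Set (Set (X × X)) :=
  {R | relDom R ∩ relRg R = ∅}

/-- The family of relations on `X` whose domain is included in their range. -/
def inclFam (X : Type*) : Set (Set (X × X)) :=
  {R | relDom R ⊆ relRg R}

/-- The family of anonymous relations: every point of the domain has two distinct images. -/
def anonFam (X Y : Type*) : Set (Set (X × Y)) :=
  {R | ∀ x ∈ relDom R, ∃ y y' : Y, y ≠ y' ∧ (x, y) ∈ R ∧ (x, y') ∈ R}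

/-- The family of rectangles `A × B`. -/
def rectFam (X Y : Type*) : Set (Set (X × Y)) :=
  {P | ∃ (A : Set X) (B : Set Y), P = A ×ˢ B}

/-- General tensor disjunction of an indexed family of families of sets. -/
def gTensorDisj {ι X : Type*} (𝒜 : ι → Set (Set X)) : Set (Set X) :=
  {U | ∃ f : ι → Set X, (∀ i, f i ∈ 𝒜 i) ∧ U = ⋃ i, f i}

/-- The Kripke operator associated to a relation `ℛ ⊆ 𝒫(Y) × 𝒫(X)^n`. -/
def kripkeOp {X Y : Type*} {n : ℕ} (ℛ : Set (Set Y × (Fin n → Set X)))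
    (𝒜 : Fin n → Set (Set X)) : Set (Set Y) :=
  {B | ∃ A : Fin n → Set X, (∀ i, A i ∈ 𝒜 i) ∧ (B, A) ∈ ℛ}

/-!
A set `A` of a convex family lies below some `G` of a dominating subfamily and above some `K`
of a supporting subfamily, so it lies in the interval `[K, G]`; conversely every such interval
lies in the family by convexity. Hence the intervals `[K, G]` with `K ⊆ G` cover the family,
and there are at most `|𝒢| · |𝒦|` of them.
-/

namespace ENat

lemma le_sInf_mul_sInf {S T : Set ℕ∞} {c : ℕ∞} (hS : 0 ∉ S) (hT : 0 ∉ T)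
    (h : ∀ a ∈ S, ∀ b ∈ T, c ≤ a * b) : c ≤ sInf S * sInf T := by
  rcases S.eq_empty_or_nonempty with rfl | hS'
  · rw [sInf_empty, top_mul (sInf_eq_zero.not.mpr hT)]
    exact le_top
  rcases T.eq_empty_or_nonempty with rfl | hT'
  · rw [sInf_empty, mul_top (sInf_eq_zero.not.mpr hS)]
    exact le_top
  exact h _ (csInf_mem hS') _ (csInf_mem hT')

end ENat

section

variable {X : Type*} {𝒜 𝒢 𝒦 : Set (Set X)} {A : Set X}

lemma DominatesFam.exists_superset (h : DominatesFam 𝒢 𝒜) (hA : A ∈ 𝒜) :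
    ∃ G ∈ 𝒢, A ⊆ G := by
  obtain ⟨-, 𝒟, h𝒟, hcover⟩ := h
  rw [← hcover, mem_iUnion₂] at hA
  obtain ⟨G, hG, hAG⟩ := hA
  exact ⟨G, hG, (h𝒟 G hG).2.2.2 ▸ subset_sUnion_of_mem hAG⟩

lemma SupportsFam.exists_subset (h : SupportsFam 𝒦 𝒜) (hA : A ∈ 𝒜) :
    ∃ K ∈ 𝒦, K ⊆ A := by
  obtain ⟨-, 𝒮, h𝒮, hcover⟩ := h
  rw [← hcover, mem_iUnion₂] at hA
  obtain ⟨K, hK, hAK⟩ := hA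
  exact ⟨K, hK, (h𝒮 K hK).2.2.2 ▸ sInter_subset_of_mem hAK⟩

lemma DominatesFam.nonempty (h : DominatesFam 𝒢 𝒜) (h𝒜 : 𝒜.Nonempty) : 𝒢.Nonempty :=
  let ⟨_, hA⟩ := h𝒜
  let ⟨G, hG, _⟩ := h.exists_superset hA
  ⟨G, hG⟩

lemma SupportsFam.nonempty (h : SupportsFam 𝒦 𝒜) (h𝒜 : 𝒜.Nonempty) : 𝒦.Nonempty :=
  let ⟨_, hA⟩ := h𝒜
  let ⟨K, hK, _⟩ := h.exists_subset hA
  ⟨K, hK⟩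

lemma cylDim_le_encard {𝕀 : Set (Set (Set X))} (h𝕀 : ∀ J ∈ 𝕀, IsIntervalFam J)
    (hcover : ⋃₀ 𝕀 = 𝒜) : cylDim 𝒜 ≤ 𝕀.encard :=
  sInf_le ⟨𝕀, h𝕀, hcover, rfl⟩

lemma cylDim_empty : cylDim (∅ : Set (Set X)) = 0 :=
  nonpos_iff_eq_zero.mp <| by
    simpa using cylDim_le_encard (𝕀 := (∅ : Set (Set (Set X)))) (by simp) (by simp)

def nestedIntervals (𝒢 𝒦 : Set (Set X)) : Set (Set (Set X)) :=
  (fun p : Set X × Set X => Icc p.2 p.1) '' ((𝒢 ×ˢ 𝒦) ∩ {p | p.2 ⊆ p.1})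

lemma isIntervalFam_of_mem_nestedIntervals {J : Set (Set X)} (hJ : J ∈ nestedIntervals 𝒢 𝒦) :
    IsIntervalFam J := by
  obtain ⟨⟨G, K⟩, ⟨-, hKG⟩, rfl⟩ := hJ
  exact ⟨K, G, hKG, rfl⟩

lemma encard_nestedIntervals_le (𝒢 𝒦 : Set (Set X)) :
    (nestedIntervals 𝒢 𝒦).encard ≤ 𝒢.encard * 𝒦.encard :=
  calc (nestedIntervals 𝒢 𝒦).encard
      ≤ ((𝒢 ×ˢ 𝒦) ∩ {p | p.2 ⊆ p.1}).encard := encard_image_le _ _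
    _ ≤ (𝒢 ×ˢ 𝒦).encard := encard_mono inter_subset_left
    _ = 𝒢.encard * 𝒦.encard := encard_prod

lemma sUnion_nestedIntervals (h : IsConvexFam 𝒜) (h𝒢 : DominatesFam 𝒢 𝒜)
    (h𝒦 : SupportsFam 𝒦 𝒜) : ⋃₀ nestedIntervals 𝒢 𝒦 = 𝒜 := by
  apply Subset.antisymm
  · rintro C ⟨-, ⟨⟨G, K⟩, ⟨⟨hG, hK⟩, -⟩, rfl⟩, hKC, hCG⟩
    exact h K (h𝒦.1 hK) G (h𝒢.1 hG) C hKC hCG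
  · intro A hA
    obtain ⟨G, hG, hAG⟩ := h𝒢.exists_superset hA
    obtain ⟨K, hK, hKA⟩ := h𝒦.exists_subset hA
    exact ⟨Icc K G, ⟨(G, K), ⟨⟨hG, hK⟩, hKA.trans hAG⟩, rfl⟩, hKA, hAG⟩

lemma cylDim_le_encard_mul_encard (h : IsConvexFam 𝒜) (h𝒢 : DominatesFam 𝒢 𝒜)
    (h𝒦 : SupportsFam 𝒦 𝒜) : cylDim 𝒜 ≤ 𝒢.encard * 𝒦.encard :=
  (cylDim_le_encard (fun _ => isIntervalFam_of_mem_nestedIntervals)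
    (sUnion_nestedIntervals h h𝒢 h𝒦)).trans (encard_nestedIntervals_le 𝒢 𝒦)

end

theorem stmt1 {X : Type*} (𝒜 : Set (Set X)) (h : IsConvexFam 𝒜) :
    cylDim 𝒜 ≤ upperDim 𝒜 * dualDim 𝒜 := by
  rcases 𝒜.eq_empty_or_nonempty with rfl | h𝒜
  · rw [cylDim_empty]
    exact zero_le
  refine ENat.le_sInf_mul_sInf ?_ ?_ ?_
  · rintro ⟨𝒢, h𝒢, h0⟩
    exact (h𝒢.nonempty h𝒜).encard_pos.ne' h0
  · rintro ⟨𝒦, h𝒦, h0⟩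
    exact (h𝒦.nonempty h𝒜).encard_pos.ne' h0
  · rintro _ ⟨𝒢, h𝒢, rfl⟩ _ ⟨𝒦, h𝒦, rfl⟩
    exact cylDim_le_encard_mul_encard h h𝒢 h𝒦
end

section
/- For any nonempty finite set X with |X| = n and any family 𝒜 ⊆ 𝒫(X), the cylindrical dimension of 𝒜 is at most 2^{n-1}. -/
open Set

/-!
Fix a point `x`. Every set `C` lies in the interval `[C \ {x}, C ∪ {x}]`, which has only two
elements, so the trace of `𝒜` on it is empty or again an interval. These intervals are indexed by
the subsets of `X \ {x}`, of which there are `2 ^ (n - 1)`.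
-/

theorem isIntervalFam_of_subset_Icc_insert {X : Type*} {ℬ : Set (Set X)} {a : Set X} {x : X}
    (hℬ : ℬ ⊆ Icc a (insert x a)) (hne : ℬ.Nonempty) : IsIntervalFam ℬ := by
  rw [(wcovBy_insert x a).Icc_eq, subset_pair_iff_eq] at hℬ
  rcases hℬ with rfl | rfl | rfl | rfl
  · exact absurd hne not_nonempty_empty
  · exact ⟨a, a, subset_rfl, (Icc_self a).symm⟩
  · exact ⟨_, _, subset_rfl, (Icc_self _).symm⟩
  · exact ⟨a, insert x a, subset_insert x a, (wcovBy_insert x a).Icc_eq.symm⟩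

theorem cylDim_le_card_of_iUnion_eq {X ι : Type*} {𝒜 : Set (Set X)} (ℬ : ι → Set (Set X))
    (hℬ : ∀ i, (ℬ i).Nonempty → IsIntervalFam (ℬ i)) (hcover : ⋃ i, ℬ i = 𝒜) :
    cylDim 𝒜 ≤ ENat.card ι := by
  have hintervals : ∀ J ∈ range ℬ \ {∅}, IsIntervalFam J := by
    rintro J ⟨⟨i, rfl⟩, hJ⟩
    exact hℬ i (nonempty_iff_ne_empty.2 hJ)
  calc cylDim 𝒜 ≤ (range ℬ \ {∅}).encard :=
        sInf_le ⟨_, hintervals, by rw [sUnion_sdiff_singleton_empty, sUnion_range, hcover], rfl⟩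
    _ ≤ (range ℬ).encard := encard_mono sdiff_subset
    _ ≤ ENat.card ι := by
      rw [← image_univ, ← encard_univ]
      exact encard_image_le _ _

theorem mem_Icc_image_preimage_val {X : Type*} (x : X) (C : Set X) :
    C ∈ Icc (Subtype.val '' (Subtype.val ⁻¹' C : Set {y // y ≠ x}))
      (insert x (Subtype.val '' (Subtype.val ⁻¹' C : Set {y // y ≠ x}))) := by
  refine ⟨image_preimage_subset _ _, fun y hy => ?_⟩
  by_cases hyx : y = x
  · exact Or.inl hyx
  · exact Or.inr ⟨⟨y, hyx⟩, hy, rfl⟩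

theorem stmt2 {X : Type*} [Fintype X] [Nonempty X] (𝒜 : Set (Set X)) :
    cylDim 𝒜 ≤ ((2 ^ (Fintype.card X - 1) : ℕ) : ℕ∞) := by
  classical
  obtain ⟨x⟩ := ‹Nonempty X›
  have hcard : ENat.card (Set {y // y ≠ x}) = ((2 ^ (Fintype.card X - 1) : ℕ) : ℕ∞) := by
    simp [ENat.card_eq_coe_fintype_card, Fintype.card_set, Fintype.card_subtype_compl]
  rw [← hcard]
  refine cylDim_le_card_of_iUnion_eq
    (fun s => 𝒜 ∩ Icc (Subtype.val '' s) (insert x (Subtype.val '' s)))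
    (fun s => isIntervalFam_of_subset_Icc_insert inter_subset_right) ?_
  exact subset_antisymm (iUnion_subset fun s => inter_subset_left)
    fun C hC => mem_iUnion.2 ⟨Subtype.val ⁻¹' C, hC, mem_Icc_image_preimage_val x C⟩
end

section
/- Let X be a nonempty finite set with |X| = n and let ℰ = {A ⊆ X : |A| is even}. Then the upper dimension, dual upper dimension, and cylindrical dimension of ℰ are all equal to 2^{n-1}. -/
/-! Adding a single point changes the parity of a finite set, so the only intervals `[S, T]`
contained in the even family are the singletons `[S, S]`. Hence every dominated or supported
convex subfamily of it, and every interval inside it, is a single set: each of the three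
dimensions is the size of the family itself, which is half of `2 ^ n` because toggling a fixed
point is a parity-reversing involution. -/

open Set

section

variable {X : Type*}

def OnlyTrivialIntervals (𝒜 : Set (Set X)) : Prop :=
  ∀ ⦃S T : Set X⦄, S ⊆ T → Icc S T ⊆ 𝒜 → S = T

theorem onlyTrivialIntervals_setOf_even_ncard [Finite X] :
    OnlyTrivialIntervals {A : Set X | Even A.ncard} := by
  intro S T hST hIcc
  by_contra hne
  obtain ⟨x, hxT, hxS⟩ := exists_of_ssubset (hST.ssubset_of_ne hne)
  have hS : Even S.ncard := hIcc ⟨subset_rfl, hST⟩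
  have hxS' : Even (insert x S).ncard := hIcc ⟨subset_insert x S, insert_subset hxT hST⟩
  rw [ncard_insert_of_notMem hxS] at hxS'
  exact Nat.not_even_iff_odd.mpr hS.add_one hxS'

theorem isConvexFam_singleton (A : Set X) : IsConvexFam {A} := by
  rintro S rfl T rfl C hSC hCT
  exact hCT.antisymm hSC

theorem dominatesFam_self (𝒜 : Set (Set X)) : DominatesFam 𝒜 𝒜 := by
  refine ⟨subset_rfl, fun G ↦ {G}, fun G hG ↦ ?_, by simp⟩
  refine ⟨singleton_subset_iff.mpr hG, isConvexFam_singleton G, ?_, sUnion_singleton G⟩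
  simp [IsDominatedFam]

theorem supportsFam_self (𝒜 : Set (Set X)) : SupportsFam 𝒜 𝒜 := by
  refine ⟨subset_rfl, fun K ↦ {K}, fun K hK ↦ ?_, by simp⟩
  refine ⟨singleton_subset_iff.mpr hK, isConvexFam_singleton K, ?_, sInter_singleton K⟩
  simp [IsSupportedFam]

namespace OnlyTrivialIntervals

variable {𝒜 : Set (Set X)}

theorem eq_singleton_of_isDominatedFam (h𝒜 : OnlyTrivialIntervals 𝒜)
    {𝒟 : Set (Set X)} (h𝒟 : 𝒟 ⊆ 𝒜)
    (hconv : IsConvexFam 𝒟) (hdom : IsDominatedFam 𝒟) : 𝒟 = {⋃₀ 𝒟} :=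
  eq_singleton_iff_unique_mem.mpr ⟨hdom, fun S hS ↦ h𝒜 (subset_sUnion_of_mem hS)
    fun C hC ↦ h𝒟 (hconv S hS _ hdom C hC.1 hC.2)⟩

theorem eq_singleton_of_isSupportedFam (h𝒜 : OnlyTrivialIntervals 𝒜)
    {𝒮 : Set (Set X)} (h𝒮 : 𝒮 ⊆ 𝒜)
    (hconv : IsConvexFam 𝒮) (hsup : IsSupportedFam 𝒮) : 𝒮 = {⋂₀ 𝒮} :=
  eq_singleton_iff_unique_mem.mpr ⟨hsup.2, fun S hS ↦ (h𝒜 (sInter_subset_of_mem hS)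
    fun C hC ↦ h𝒮 (hconv _ hsup.2 S hS C hC.1 hC.2)).symm⟩

theorem eq_singleton_of_isIntervalFam (h𝒜 : OnlyTrivialIntervals 𝒜)
    {J : Set (Set X)} (hJ : J ⊆ 𝒜) (hint : IsIntervalFam J) : ∃ A, J = {A} := by
  obtain ⟨A, B, hAB, rfl⟩ := hint
  obtain rfl := h𝒜 hAB hJ
  exact ⟨A, Icc_self A⟩

theorem dominatesFam_iff (h𝒜 : OnlyTrivialIntervals 𝒜) {𝒢 : Set (Set X)} :
    DominatesFam 𝒢 𝒜 ↔ 𝒢 = 𝒜 := by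
  refine ⟨fun ⟨h𝒢, 𝒟, h𝒟, hcover⟩ ↦ h𝒢.antisymm fun A hA ↦ ?_, fun h ↦ h ▸ dominatesFam_self 𝒜⟩
  rw [← hcover, mem_iUnion₂] at hA
  obtain ⟨G, hG, hA⟩ := hA
  obtain ⟨hsub, hconv, hdom, hunion⟩ := h𝒟 G hG
  rw [h𝒜.eq_singleton_of_isDominatedFam hsub hconv hdom, hunion, mem_singleton_iff] at hA
  exact hA ▸ hG

theorem supportsFam_iff (h𝒜 : OnlyTrivialIntervals 𝒜) {𝒦 : Set (Set X)} :
    SupportsFam 𝒦 𝒜 ↔ 𝒦 = 𝒜 := by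
  refine ⟨fun ⟨h𝒦, 𝒮, h𝒮, hcover⟩ ↦ h𝒦.antisymm fun A hA ↦ ?_, fun h ↦ h ▸ supportsFam_self 𝒜⟩
  rw [← hcover, mem_iUnion₂] at hA
  obtain ⟨K, hK, hA⟩ := hA
  obtain ⟨hsub, hconv, hsup, hinter⟩ := h𝒮 K hK
  rw [h𝒜.eq_singleton_of_isSupportedFam hsub hconv hsup, hinter, mem_singleton_iff] at hA
  exact hA ▸ hK

theorem intervalCover_iff (h𝒜 : OnlyTrivialIntervals 𝒜) {𝕀 : Set (Set (Set X))} :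
    ((∀ J ∈ 𝕀, IsIntervalFam J) ∧ ⋃₀ 𝕀 = 𝒜) ↔ 𝕀 = singleton '' 𝒜 := by
  constructor
  · rintro ⟨hint, rfl⟩
    have hsingleton (J) (hJ : J ∈ 𝕀) : ∃ A, J = {A} :=
      h𝒜.eq_singleton_of_isIntervalFam (subset_sUnion_of_mem hJ) (hint J hJ)
    ext J
    constructor
    · intro hJ
      obtain ⟨A, rfl⟩ := hsingleton J hJ
      exact ⟨A, ⟨{A}, hJ, rfl⟩, rfl⟩
    · rintro ⟨A, ⟨J, hJ, hAJ⟩, rfl⟩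
      obtain ⟨B, rfl⟩ := hsingleton J hJ
      rwa [mem_singleton_iff.mp hAJ]
  · rintro rfl
    refine ⟨?_, by ext; simp⟩
    rintro _ ⟨A, -, rfl⟩
    exact ⟨A, A, subset_rfl, (Icc_self A).symm⟩

theorem upperDim_eq (h𝒜 : OnlyTrivialIntervals 𝒜) : upperDim 𝒜 = 𝒜.encard := by
  simp [upperDim, h𝒜.dominatesFam_iff]

theorem dualDim_eq (h𝒜 : OnlyTrivialIntervals 𝒜) : dualDim 𝒜 = 𝒜.encard := by
  simp [dualDim, h𝒜.supportsFam_iff]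

theorem cylDim_eq (h𝒜 : OnlyTrivialIntervals 𝒜) : cylDim 𝒜 = 𝒜.encard := by
  simp [cylDim, ← and_assoc, h𝒜.intervalCover_iff, singleton_injective.encard_image]

end OnlyTrivialIntervals

end

theorem even_ncard_symmDiff_singleton_iff {X : Type*} [Finite X] (A : Set X) (x : X) :
    Even (symmDiff A {x}).ncard ↔ ¬ Even A.ncard := by
  by_cases hx : x ∈ A
  · have hdiff : symmDiff A {x} = A \ {x} := by
      rw [Set.symmDiff_def, sdiff_eq_empty.mpr (singleton_subset_iff.mpr hx), union_empty]
    rw [hdiff, ← ncard_sdiff_singleton_add_one hx, Nat.even_add_one, not_not]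
  · have hins : symmDiff A {x} = insert x A := by
      rw [Set.symmDiff_def, sdiff_singleton_eq_self hx, union_sdiff_self, union_singleton]
    rw [hins, ncard_insert_of_notMem hx, Nat.even_add_one]

theorem ncard_setOf_even_ncard {X : Type*} [Fintype X] [Nonempty X] :
    {A : Set X | Even A.ncard}.ncard = 2 ^ (Fintype.card X - 1) := by
  set ℰ := {A : Set X | Even A.ncard}
  obtain ⟨x⟩ := ‹Nonempty X›
  have htoggle : (fun A : Set X ↦ symmDiff A {x}).Involutive :=
    fun A ↦ symmDiff_symmDiff_cancel_right {x} A
  have hcompl : ℰᶜ = (fun A ↦ symmDiff A {x}) ⁻¹' ℰ := by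
    ext A
    simp [ℰ, even_ncard_symmDiff_singleton_iff]
  have hhalf : ℰᶜ.ncard = ℰ.ncard := by
    rw [hcompl, ncard_preimage_of_injective_subset_range htoggle.injective
      (htoggle.surjective.range_eq ▸ subset_univ ℰ)]
  have htotal : ℰ.ncard + ℰᶜ.ncard = 2 ^ Fintype.card X := by
    rw [ncard_add_ncard_compl, Nat.card_eq_fintype_card, Fintype.card_set]
  have hpow : 2 ^ Fintype.card X = 2 * 2 ^ (Fintype.card X - 1) := by
    rw [← pow_succ', Nat.sub_add_cancel Fintype.card_pos]
  omega

theorem stmt3 {X : Type*} [Fintype X] [Nonempty X] :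
    upperDim {A : Set X | Even A.ncard} = ((2 ^ (Fintype.card X - 1) : ℕ) : ℕ∞) ∧
    dualDim {A : Set X | Even A.ncard} = ((2 ^ (Fintype.card X - 1) : ℕ) : ℕ∞) ∧
    cylDim {A : Set X | Even A.ncard} = ((2 ^ (Fintype.card X - 1) : ℕ) : ℕ∞) := by
  have hℰ := onlyTrivialIntervals_setOf_even_ncard (X := X)
  have hcard : {A : Set X | Even A.ncard}.encard = ((2 ^ (Fintype.card X - 1) : ℕ) : ℕ∞) := by
    rw [← (toFinite _).cast_ncard_eq, ncard_setOf_even_ncard]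
  exact ⟨hℰ.upperDim_eq.trans hcard, hℰ.dualDim_eq.trans hcard, hℰ.cylDim_eq.trans hcard⟩
end

section
/- For any binary operation ⊛ on {0,1}, if 𝒜, ℬ ⊆ 𝒫(X) are intervals, then 𝒜 ⊛ ℬ is also an interval (provided it is nonempty). -/
open Set

/-!
Identifying a set with its characteristic function `X → Bool`, an interval `[A, B]` is a box
`∏ₓ V x` with every factor `V x ⊆ Bool` nonempty, and conversely. Since `*` acts pointwise, the
tensor of two boxes is the box of the pointwise images `op '' (V x × W x)`, whose factors are again
nonempty.
-/

section

variable {X : Type*}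

theorem chiFun_eq_true {A : Set X} {x : X} : chiFun A x = true ↔ x ∈ A := by
  classical
  simp [chiFun]

theorem chiFun_setOf (p : X → Bool) : chiFun {x | p x = true} = p := by
  funext x
  rw [Bool.eq_iff_iff, chiFun_eq_true, mem_ofPred_eq]

def boxFam (V : X → Set Bool) : Set (Set X) := {C | ∀ x, chiFun C x ∈ V x}

def intervalFactor (A B : Set X) (x : X) : Set Bool := {b | (x ∈ A → b) ∧ (b → x ∈ B)}

theorem Icc_eq_boxFam (A B : Set X) : Icc A B = boxFam (intervalFactor A B) := by
  ext C
  simp only [boxFam, intervalFactor, mem_Icc, mem_ofPred_eq, chiFun_eq_true]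
  exact ⟨fun h x => ⟨@h.1 x, @h.2 x⟩, fun h => ⟨fun x => (h x).1, fun x => (h x).2⟩⟩

theorem intervalFactor_nonempty {A B : Set X} (hAB : A ⊆ B) (x : X) :
    (intervalFactor A B x).Nonempty :=
  ⟨chiFun A x, chiFun_eq_true.2, fun h => hAB (chiFun_eq_true.1 h)⟩

theorem boxFam_eq_Icc (V : X → Set Bool) :
    boxFam V = Icc {x | false ∉ V x} {x | true ∈ V x} := by
  ext C
  simp only [boxFam, mem_Icc, mem_ofPred_eq]
  refine ⟨fun h => ⟨fun x hx => ?_, fun x hx => ?_⟩, fun h x => ?_⟩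
  · by_contra hC
    exact hx (Bool.eq_false_iff.2 (mt chiFun_eq_true.1 hC) ▸ h x)
  · exact chiFun_eq_true.2 hx ▸ h x
  · cases hC : chiFun C x
    · by_contra hf
      exact Bool.false_ne_true (hC ▸ chiFun_eq_true.2 (h.1 hf))
    · exact h.2 (chiFun_eq_true.1 hC)

theorem isIntervalFam_iff {𝒜 : Set (Set X)} :
    IsIntervalFam 𝒜 ↔ ∃ V : X → Set Bool, (∀ x, (V x).Nonempty) ∧ 𝒜 = boxFam V := by
  constructor
  · rintro ⟨A, B, hAB, rfl⟩
    exact ⟨intervalFactor A B, intervalFactor_nonempty hAB, Icc_eq_boxFam A B⟩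
  · rintro ⟨V, hV, rfl⟩
    refine ⟨_, _, fun x hx => ?_, boxFam_eq_Icc V⟩
    obtain ⟨b, hb⟩ := hV x
    cases b
    · exact absurd hb hx
    · exact hb

theorem tensorFam_boxFam (op : Bool → Bool → Bool) (V W : X → Set Bool) :
    tensorFam op (boxFam V) (boxFam W) = boxFam fun x => image2 op (V x) (W x) := by
  ext C
  constructor
  · rintro ⟨A, hA, B, hB, rfl⟩ x
    refine ⟨_, hA x, _, hB x, ?_⟩
    rw [Bool.eq_iff_iff, chiFun_eq_true]
    rfl
  · intro hC
    choose a ha b hb hab using hC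
    refine ⟨{x | a x = true}, ?_, {x | b x = true}, ?_, ?_⟩
    · simpa only [boxFam, mem_ofPred_eq, chiFun_setOf] using ha
    · simpa only [boxFam, mem_ofPred_eq, chiFun_setOf] using hb
    · ext x
      rw [← chiFun_eq_true (A := C), ← hab x]
      simp only [setOp, mem_ofPred_eq, chiFun_setOf]

end

theorem stmt7_general {X : Type*} (op : Bool → Bool → Bool) (𝒜 ℬ : Set (Set X))
    (hA : IsIntervalFam 𝒜) (hB : IsIntervalFam ℬ) :
    IsIntervalFam (tensorFam op 𝒜 ℬ) := by
  obtain ⟨V, hV, rfl⟩ := isIntervalFam_iff.1 hA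
  obtain ⟨W, hW, rfl⟩ := isIntervalFam_iff.1 hB
  rw [tensorFam_boxFam]
  exact isIntervalFam_iff.2 ⟨_, fun x => (hV x).image2 (hW x), rfl⟩

theorem stmt7 {X : Type*} (op : Bool → Bool → Bool) (𝒜 ℬ : Set (Set X))
    (hA : IsIntervalFam 𝒜) (hB : IsIntervalFam ℬ)
    (hne : (tensorFam op 𝒜 ℬ).Nonempty) :
    IsIntervalFam (tensorFam op 𝒜 ℬ) :=
  stmt7_general op 𝒜 ℬ hA hB
end

section
/- Let X, Y be finite sets with |X| = ℓ ≥ 2 and |Y| = n ≥ 2, and let ℱ = {f ⊆ X × Y : f is a (partial) function from X to Y}. Then DD(ℱ) = CD(ℱ) = n^ℓ and DDd(ℱ) = 1. -/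
open Set

section Aux

variable {X Y : Type*}

/-- The graph of a total function, as a set of pairs. -/
def graphOf (g : X → Y) : Set (X × Y) := {p | p.2 = g p.1}

lemma graphOf_mem (g : X → Y) : graphOf g ∈ partialFunFam X Y := by
  intro x y y' hy hy'
  simp only [graphOf, Set.mem_setOf_eq] at hy hy'
  rw [hy, hy']

lemma graphOf_inj : Function.Injective (graphOf (X := X) (Y := Y)) := by
  intro g g' h
  funext x
  have hx : (x, g x) ∈ graphOf g := rfl
  rw [h] at hx
  exact hx

lemma sub_partialFun {f g : Set (X × Y)} (hg : g ∈ partialFunFam X Y) (h : f ⊆ g) :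
    f ∈ partialFunFam X Y :=
  fun x y y' hy hy' => hg x y y' (h hy) (h hy')

lemma empty_mem_partialFun : (∅ : Set (X × Y)) ∈ partialFunFam X Y := by
  intro x y y' hy; exact absurd hy (Set.notMem_empty _)

lemma graphOf_max (g : X → Y) {f : Set (X × Y)} (hf : f ∈ partialFunFam X Y)
    (h : graphOf g ⊆ f) : f = graphOf g := by
  ext ⟨x, y⟩
  constructor
  · intro hxy
    have hgx : (x, g x) ∈ f := h rfl
    exact hf x y (g x) hxy hgx
  · intro hxy; exact h hxy

lemma exists_graph_ext [Nonempty Y] {f : Set (X × Y)} (hf : f ∈ partialFunFam X Y) :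
    ∃ g : X → Y, f ⊆ graphOf g := by
  classical
  refine ⟨fun x => if h : ∃ y, (x, y) ∈ f then h.choose else Classical.arbitrary Y, ?_⟩
  rintro ⟨x, y⟩ hxy
  have h : ∃ y, (x, y) ∈ f := ⟨y, hxy⟩
  show y = if h : ∃ y, (x, y) ∈ f then h.choose else Classical.arbitrary Y
  rw [dif_pos h]
  exact hf x y h.choose hxy h.choose_spec

lemma encard_range_graphOf [Fintype X] [Fintype Y] :
    (Set.range (graphOf (X := X) (Y := Y))).encard =
      ((Fintype.card Y ^ Fintype.card X : ℕ) : ℕ∞) := by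
  classical
  rw [← Set.image_univ, (graphOf_inj.injOn).encard_image, Set.encard_univ,
    ENat.card_eq_coe_fintype_card, Fintype.card_fun]

lemma sUnion_Icc_empty (G : Set X) : ⋃₀ (Set.Icc (∅ : Set X) G) = G := by
  apply subset_antisymm
  · rintro x ⟨C, ⟨-, hC⟩, hx⟩
    exact hC hx
  · intro x hx
    exact ⟨G, ⟨Set.empty_subset _, subset_rfl⟩, hx⟩

lemma Icc_convex (A B : Set X) : IsConvexFam (Set.Icc A B) := by
  rintro S ⟨hS1, -⟩ T ⟨-, hT2⟩ C hSC hCT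
  exact ⟨hS1.trans hSC, hCT.trans hT2⟩

lemma Icc_empty_inj {A B : Set X} (h : Set.Icc (∅ : Set X) A = Set.Icc ∅ B) : A = B := by
  have hA : A ∈ Set.Icc (∅ : Set X) B := h ▸ ⟨Set.empty_subset _, subset_rfl⟩
  have hB : B ∈ Set.Icc (∅ : Set X) A := h ▸ ⟨Set.empty_subset _, subset_rfl⟩
  exact subset_antisymm hA.2 hB.2

end Aux

theorem stmt11 {X Y : Type*} [Fintype X] [Fintype Y]
    (hX : 2 ≤ Fintype.card X) (hY : 2 ≤ Fintype.card Y) :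
    upperDim (partialFunFam X Y) = ((Fintype.card Y ^ Fintype.card X : ℕ) : ℕ∞) ∧
    cylDim (partialFunFam X Y) = ((Fintype.card Y ^ Fintype.card X : ℕ) : ℕ∞) ∧
    dualDim (partialFunFam X Y) = 1 := by
  classical
  have hYne : Nonempty Y := Fintype.card_pos_iff.mp (by omega)
  set ℱ := partialFunFam X Y with hℱ
  set TG := Set.range (graphOf (X := X) (Y := Y)) with hTG
  have hTGsub : TG ⊆ ℱ := by rintro _ ⟨g, rfl⟩; exact graphOf_mem g
  have hTGcard : TG.encard = ((Fintype.card Y ^ Fintype.card X : ℕ) : ℕ∞) :=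
    encard_range_graphOf
  have hcover : (⋃ G ∈ TG, Set.Icc (∅ : Set (X × Y)) G) = ℱ := by
    apply subset_antisymm
    · intro f hf
      simp only [Set.mem_iUnion] at hf
      obtain ⟨G, hG, -, hfG⟩ := hf
      exact sub_partialFun (hTGsub hG) hfG
    · intro f hf
      obtain ⟨g, hg⟩ := exists_graph_ext hf
      simp only [Set.mem_iUnion]
      exact ⟨graphOf g, ⟨g, rfl⟩, Set.empty_subset _, hg⟩
  refine ⟨?_, ?_, ?_⟩
  · -- upperDim
    apply le_antisymm
    · apply sInf_le
      refine ⟨TG, ⟨hTGsub, fun G => Set.Icc ∅ G, fun G hG => ⟨?_, Icc_convex _ _, ?_, sUnion_Icc_empty G⟩, hcover⟩, hTGcard⟩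
      · rintro C ⟨-, hC⟩; exact sub_partialFun (hTGsub hG) hC
      · unfold IsDominatedFam
        rw [sUnion_Icc_empty]; exact ⟨Set.empty_subset _, subset_rfl⟩
    · apply le_sInf
      rintro m ⟨𝒢, ⟨h𝒢, 𝒟, hD, hcov⟩, rfl⟩
      have hsub : TG ⊆ 𝒢 := by
        rintro _ ⟨g, rfl⟩
        have hg : graphOf g ∈ ℱ := graphOf_mem g
        rw [← hcov] at hg
        simp only [Set.mem_iUnion] at hg
        obtain ⟨G, hG𝒢, hgD⟩ := hg
        obtain ⟨-, -, -, hU⟩ := hD G hG𝒢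
        have hGsub : graphOf g ⊆ G := hU ▸ Set.subset_sUnion_of_mem hgD
        have hGg : G = graphOf g := graphOf_max g (h𝒢 hG𝒢) hGsub
        rwa [← hGg]
      exact hTGcard ▸ Set.encard_le_encard hsub
  · -- cylDim
    apply le_antisymm
    · apply sInf_le
      refine ⟨Set.range (fun g : X → Y => Set.Icc ∅ (graphOf g)), ?_, ?_, ?_⟩
      · rintro _ ⟨g, rfl⟩; exact ⟨∅, graphOf g, Set.empty_subset _, rfl⟩
      · rw [← hcover]
        ext f
        simp only [Set.mem_sUnion, Set.mem_range, Set.mem_iUnion]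
        constructor
        · rintro ⟨_, ⟨g, rfl⟩, hf⟩; exact ⟨graphOf g, ⟨g, rfl⟩, hf⟩
        · rintro ⟨_, ⟨g, rfl⟩, hf⟩; exact ⟨_, ⟨g, rfl⟩, hf⟩
      · rw [← Set.image_univ, (Function.Injective.injOn
          (fun a b h => graphOf_inj (Icc_empty_inj h))).encard_image, Set.encard_univ,
          ENat.card_eq_coe_fintype_card, Fintype.card_fun]
    · apply le_sInf
      rintro m ⟨𝕀, hInt, hcov, rfl⟩
      have hpick : ∀ g : X → Y, ∃ J ∈ 𝕀, graphOf g ∈ J := by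
        intro g
        have : graphOf g ∈ ⋃₀ 𝕀 := hcov ▸ graphOf_mem g
        exact this
      choose φ hφ1 hφ2 using hpick
      have hinj : Function.Injective φ := by
        intro a b hab
        obtain ⟨A, B, hAB, hJ⟩ := hInt (φ a) (hφ1 a)
        have ha : graphOf a ∈ Set.Icc A B := hJ ▸ hφ2 a
        have hb : graphOf b ∈ Set.Icc A B := (hab ▸ hJ) ▸ hφ2 b
        have hBℱ : B ∈ ℱ := by
          rw [← hcov]
          exact ⟨φ a, hφ1 a, hJ ▸ ⟨hAB, subset_rfl⟩⟩
        have h1 : B = graphOf a := graphOf_max a hBℱ ha.2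
        have h2 : B = graphOf b := graphOf_max b hBℱ hb.2
        exact graphOf_inj (h1 ▸ h2)
      have hr : Set.range φ ⊆ 𝕀 := by rintro _ ⟨g, rfl⟩; exact hφ1 g
      calc ((Fintype.card Y ^ Fintype.card X : ℕ) : ℕ∞)
          = (Set.range φ).encard := by
            rw [← Set.image_univ, hinj.injOn.encard_image, Set.encard_univ,
              ENat.card_eq_coe_fintype_card, Fintype.card_fun]
        _ ≤ 𝕀.encard := Set.encard_le_encard hr
  · -- dualDim
    have hInter : ⋂₀ ℱ = ∅ :=
      subset_antisymm (Set.sInter_subset_of_mem empty_mem_partialFun) (Set.empty_subset _)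
    apply le_antisymm
    · apply sInf_le
      refine ⟨{∅}, ⟨?_, fun _ => ℱ, ?_, ?_⟩, Set.encard_singleton _⟩
      · intro K hK; rw [Set.mem_singleton_iff] at hK; rw [hK]; exact empty_mem_partialFun
      · intro K hK
        rw [Set.mem_singleton_iff] at hK
        refine ⟨subset_rfl, ?_, ⟨⟨∅, empty_mem_partialFun⟩, ?_⟩, ?_⟩
        · intro S _ T hT C _ hCT; exact sub_partialFun hT hCT
        · rw [hInter]; exact empty_mem_partialFun
        · rw [hInter, hK]
      · simp
    · apply le_sInf
      rintro m ⟨𝒦, ⟨h1, 𝒮, h2, h3⟩, rfl⟩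
      rw [ENat.one_le_iff_ne_zero, Ne, Set.encard_eq_zero]
      rintro rfl
      simp only [Set.mem_empty_iff_false, Set.iUnion_of_empty, Set.iUnion_empty] at h3
      have h4 : (∅ : Set (X × Y)) ∈ ℱ := empty_mem_partialFun
      rw [← h3] at h4
      exact Set.notMem_empty _ h4
end

section
/- Let X be a finite set with |X| = ℓ ≥ 2 and let 𝒳 = {R ⊆ X × X : dom(R) ∩ rg(R) = ∅}. Then DD(𝒳) = CD(𝒳) = 2^ℓ − 2 and DDd(𝒳) = 1. -/
open Set

/-!
For a down-set `𝒜` of subsets of a finite type, the principal ideals `Iic G` of its maximal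
elements `G` form both a dominating decomposition and a cover by intervals, while every maximal
element must belong to any dominating family and must be the top of some interval of any interval
cover. Hence `DD(𝒜) = CD(𝒜)` is the number of maximal elements; and `{∅}` supports `𝒜` with
the single convex family `𝒜` itself, whose intersection is `∅`.

The family `𝒳` is such a down-set, and its maximal elements are the relations `A × Aᶜ` with
`∅ ≠ A ≠ X` (the domain `A` determines the relation), of which there are `2 ^ ℓ - 2`.
-/

section LowerSet

variable {X : Type*} {𝒜 : Set (Set X)}

theorem isConvexFam_of_isLowerSet (h𝒜 : IsLowerSet 𝒜) : IsConvexFam 𝒜 :=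
  fun _ _ _ hT _ _ hCT => h𝒜 hCT hT

theorem mem_of_dominatesFam_of_maximal {𝒢 : Set (Set X)} (h𝒢 : DominatesFam 𝒢 𝒜)
    {G : Set X} (hG : Maximal (· ∈ 𝒜) G) : G ∈ 𝒢 := by
  obtain ⟨h𝒢𝒜, 𝒟, h𝒟, h𝒟_cover⟩ := h𝒢
  obtain ⟨G', hG', hG_mem⟩ := mem_iUnion₂.mp (h𝒟_cover ▸ hG.prop : G ∈ ⋃ G' ∈ 𝒢, 𝒟 G')
  have hGG' : G ⊆ G' := (h𝒟 G' hG').2.2.2 ▸ subset_sUnion_of_mem hG_mem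
  rwa [hG.eq_of_subset (h𝒢𝒜 hG') hGG']

theorem mem_sUnion_image_of_maximal {𝕀 : Set (Set (Set X))} (h𝕀 : ∀ J ∈ 𝕀, IsIntervalFam J)
    (h𝕀𝒜 : ⋃₀ 𝕀 = 𝒜) {G : Set X} (hG : Maximal (· ∈ 𝒜) G) : G ∈ sUnion '' 𝕀 := by
  obtain ⟨J, hJ, hGJ⟩ := mem_sUnion.mp (h𝕀𝒜 ▸ hG.prop : G ∈ ⋃₀ 𝕀)
  obtain ⟨A, B, hAB, rfl⟩ := h𝕀 J hJ
  have hB : B ∈ 𝒜 := h𝕀𝒜 ▸ mem_sUnion_of_mem (right_mem_Icc.mpr hAB) hJ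
  refine ⟨Icc A B, hJ, ?_⟩
  rw [hG.eq_of_subset hB hGJ.2]
  exact (isGreatest_Icc hAB).isLUB.sSup_eq

section Finite

variable [Finite X]

theorem biUnion_Iic_maximal (h𝒜 : IsLowerSet 𝒜) :
    ⋃ G ∈ {G | Maximal (· ∈ 𝒜) G}, Iic G = 𝒜 := by
  ext R
  simp only [mem_iUnion, mem_Iic, exists_prop]
  refine ⟨fun ⟨G, hG, hRG⟩ => h𝒜 hRG hG.prop, fun hR => ?_⟩
  obtain ⟨G, hRG, hG⟩ := Finite.exists_le_maximal hR
  exact ⟨G, hG, hRG⟩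

theorem dominatesFam_maximal (h𝒜 : IsLowerSet 𝒜) :
    DominatesFam {G | Maximal (· ∈ 𝒜) G} 𝒜 := by
  refine ⟨fun G hG => hG.prop, Iic, fun G hG => ?_, biUnion_Iic_maximal h𝒜⟩
  have hG_sUnion : ⋃₀ Iic G = G := isLUB_Iic.sSup_eq
  refine ⟨fun R hR => h𝒜 hR hG.prop, isConvexFam_of_isLowerSet (isLowerSet_Iic G), ?_, hG_sUnion⟩
  rw [IsDominatedFam, hG_sUnion]
  exact mem_Iic.mpr subset_rfl

theorem upperDim_eq_encard_maximal (h𝒜 : IsLowerSet 𝒜) :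
    upperDim 𝒜 = {G | Maximal (· ∈ 𝒜) G}.encard := by
  refine le_antisymm (sInf_le ⟨_, dominatesFam_maximal h𝒜, rfl⟩) (le_sInf ?_)
  rintro _ ⟨𝒢, h𝒢, rfl⟩
  exact encard_le_encard fun G hG => mem_of_dominatesFam_of_maximal h𝒢 hG

theorem cylDim_eq_encard_maximal (h𝒜 : IsLowerSet 𝒜) :
    cylDim 𝒜 = {G | Maximal (· ∈ 𝒜) G}.encard := by
  refine le_antisymm (sInf_le ⟨Iic '' {G | Maximal (· ∈ 𝒜) G}, ?_, ?_, ?_⟩) (le_sInf ?_)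
  · rintro _ ⟨G, -, rfl⟩
    exact ⟨∅, G, empty_subset G, (Icc_bot (a := G)).symm⟩
  · rw [sUnion_image, biUnion_Iic_maximal h𝒜]
  · exact Iic_injective.injOn.encard_image
  · rintro _ ⟨𝕀, h𝕀, h𝕀𝒜, rfl⟩
    calc {G | Maximal (· ∈ 𝒜) G}.encard ≤ (sUnion '' 𝕀).encard :=
          encard_le_encard fun G hG => mem_sUnion_image_of_maximal h𝕀 h𝕀𝒜 hG
      _ ≤ 𝕀.encard := encard_image_le _ _

end Finite

theorem dualDim_eq_one (h𝒜 : IsLowerSet 𝒜) (hne : 𝒜.Nonempty) : dualDim 𝒜 = 1 := by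
  obtain ⟨A, hA⟩ := hne
  have hempty : ∅ ∈ 𝒜 := h𝒜 (empty_subset A) hA
  have hsInter : ⋂₀ 𝒜 = ∅ := subset_empty_iff.mp (sInter_subset_of_mem hempty)
  refine le_antisymm (sInf_le ⟨{∅}, ⟨?_, fun _ => 𝒜, ?_, ?_⟩, encard_singleton ∅⟩) (le_sInf ?_)
  · exact singleton_subset_iff.mpr hempty
  · rintro K rfl
    exact ⟨subset_rfl, isConvexFam_of_isLowerSet h𝒜, ⟨⟨A, hA⟩, hsInter ▸ hempty⟩, hsInter⟩
  · simp
  · rintro _ ⟨𝒦, ⟨-, 𝒮, -, h𝒮𝒜⟩, rfl⟩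
    obtain ⟨K, hK, -⟩ := mem_iUnion₂.mp (h𝒮𝒜 ▸ hempty : ∅ ∈ ⋃ K ∈ 𝒦, 𝒮 K)
    exact Order.one_le_iff_ne_zero.mpr (encard_ne_zero.mpr ⟨K, hK⟩)

end LowerSet

section exclFam

variable {X : Type*}

theorem mem_exclFam_iff {R : Set (X × X)} :
    R ∈ exclFam X ↔ ∀ w x z, (w, x) ∈ R → (x, z) ∉ R := by
  simp only [exclFam, relDom, relRg, mem_ofPred_eq, eq_empty_iff_forall_notMem, mem_inter_iff]
  grind

theorem isLowerSet_exclFam : IsLowerSet (exclFam X) := fun _ _ hRS hR =>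
  mem_exclFam_iff.mpr fun w x z hwx hxz =>
    mem_exclFam_iff.mp hR w x z (hRS hwx) (hRS hxz)

theorem prod_compl_mem_exclFam (A : Set X) : A ×ˢ Aᶜ ∈ exclFam X :=
  mem_exclFam_iff.mpr fun _ _ _ hwx hxz => hwx.2 hxz.1

theorem exists_prod_compl_superset [Nontrivial X] {R : Set (X × X)} (hR : R ∈ exclFam X) :
    ∃ A : Set X, A.Nonempty ∧ A ≠ univ ∧ R ⊆ A ×ˢ Aᶜ := by
  rcases R.eq_empty_or_nonempty with rfl | ⟨⟨x, y⟩, hxy⟩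
  · obtain ⟨a, b, hab⟩ := exists_pair_ne X
    exact ⟨{a}, singleton_nonempty a, fun h => hab (h ▸ mem_univ b).symm, empty_subset _⟩
  · refine ⟨relDom R, ⟨x, y, hxy⟩, fun h => ?_, fun ⟨w, x⟩ hwx => ⟨⟨x, hwx⟩, ?_⟩⟩
    · obtain ⟨z, hyz⟩ := h ▸ mem_univ y
      exact mem_exclFam_iff.mp hR x y z hxy hyz
    · rintro ⟨z, hxz⟩
      exact mem_exclFam_iff.mp hR w x z hwx hxz

theorem maximal_prod_compl {A : Set X} (hA : A.Nonempty) (hAc : Aᶜ.Nonempty) :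
    Maximal (· ∈ exclFam X) (A ×ˢ Aᶜ) := by
  refine ⟨prod_compl_mem_exclFam A, fun R hR hAR ⟨x, y⟩ hxy => ⟨?_, ?_⟩⟩
  · by_contra hx
    obtain ⟨a, ha⟩ := hA
    exact mem_exclFam_iff.mp hR a x y (hAR ⟨ha, hx⟩) hxy
  · intro hy
    obtain ⟨b, hb⟩ := hAc
    exact mem_exclFam_iff.mp hR x y b hxy (hAR ⟨hy, hb⟩)

theorem setOf_maximal_exclFam [Nontrivial X] :
    {R | Maximal (· ∈ exclFam X) R} =
      (fun A : Set X => A ×ˢ Aᶜ) '' {A | A.Nonempty ∧ A ≠ univ} := by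
  ext R
  refine ⟨fun hR => ?_, ?_⟩
  · obtain ⟨A, hA, hA_ne, hRA⟩ := exists_prod_compl_superset hR.prop
    exact ⟨A, ⟨hA, hA_ne⟩, (hR.eq_of_subset (prod_compl_mem_exclFam A) hRA).symm⟩
  · rintro ⟨A, ⟨hA, hA_ne⟩, rfl⟩
    exact maximal_prod_compl hA (nonempty_compl.mpr hA_ne)

theorem encard_setOf_nonempty_ne_univ [Fintype X] [Nonempty X] :
    {A : Set X | A.Nonempty ∧ A ≠ univ}.encard = ((2 ^ Fintype.card X - 2 : ℕ) : ℕ∞) := by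
  have hproper : {A : Set X | A.Nonempty ∧ A ≠ univ} = {∅, univ}ᶜ := by
    ext A
    simp [nonempty_iff_ne_empty]
  rw [hproper, ← (toFinite _).cast_ncard_eq, ncard_compl, ncard_pair empty_ne_univ,
    Nat.card_eq_fintype_card, Fintype.card_set]

theorem encard_setOf_maximal_exclFam [Fintype X] [Nontrivial X] :
    {R | Maximal (· ∈ exclFam X) R}.encard = ((2 ^ Fintype.card X - 2 : ℕ) : ℕ∞) := by
  rw [setOf_maximal_exclFam, ← encard_setOf_nonempty_ne_univ]
  refine InjOn.encard_image fun A hA B hB hAB => ?_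
  rw [← fst_image_prod A (nonempty_compl.mpr hA.2), ← fst_image_prod B (nonempty_compl.mpr hB.2)]
  exact congrArg (Prod.fst '' ·) hAB

end exclFam

theorem stmt12 {X : Type*} [Fintype X] (hX : 2 ≤ Fintype.card X) :
    upperDim (exclFam X) = ((2 ^ Fintype.card X - 2 : ℕ) : ℕ∞) ∧
    cylDim (exclFam X) = ((2 ^ Fintype.card X - 2 : ℕ) : ℕ∞) ∧
    dualDim (exclFam X) = 1 := by
  have : Nontrivial X := Fintype.one_lt_card_iff_nontrivial.mp hX
  refine ⟨?_, ?_, dualDim_eq_one isLowerSet_exclFam ⟨_, prod_compl_mem_exclFam ∅⟩⟩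
  · rw [upperDim_eq_encard_maximal isLowerSet_exclFam, encard_setOf_maximal_exclFam]
  · rw [cylDim_eq_encard_maximal isLowerSet_exclFam, encard_setOf_maximal_exclFam]
end

section
/- Let X be a finite set with |X| ≥ 2 and let ℐ_⊆ = {R ⊆ X × X : dom(R) ⊆ rg(R)}. For R, S ∈ ℐ_⊆ with S ⊆ R, the interval [S,R] is contained in ℐ_⊆ if and only if dom(R ∖ id_X) ⊆ rg(S), where id_X is the identity relation on X. -/
open Set

/-
A loop `(x, x)` puts `x` into the range as well as the domain, so only the domain of the
non-loop part of a relation has to be covered by its range. Over `[S, R]` the range is smallest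
at `S` and the non-loop domain largest at `R`, which gives one direction; conversely, for a
non-loop `(x, y) ∈ R` the relation `insert (x, y) S` lies in `[S, R]`, and its range only gains
`y ≠ x`, so `x ∈ rg(S)`.
-/

section Relations

variable {X Y : Type*}

theorem relDom_mono {S T : Set (X × Y)} (h : S ⊆ T) : relDom S ⊆ relDom T :=
  fun _ ⟨y, hy⟩ => ⟨y, h hy⟩

theorem relRg_mono {S T : Set (X × Y)} (h : S ⊆ T) : relRg S ⊆ relRg T :=
  fun _ ⟨x, hx⟩ => ⟨x, h hx⟩

theorem relRg_insert (p : X × Y) (S : Set (X × Y)) :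
    relRg (insert p S) = insert p.2 (relRg S) := by
  ext y
  simp only [relRg, mem_insert_iff, mem_ofPred_eq]
  constructor
  · rintro ⟨x, rfl | hx⟩
    exacts [Or.inl rfl, Or.inr ⟨x, hx⟩]
  · rintro (rfl | ⟨x, hx⟩)
    exacts [⟨p.1, Or.inl rfl⟩, ⟨x, Or.inr hx⟩]

theorem mem_inclFam_iff (T : Set (X × X)) :
    T ∈ inclFam X ↔ relDom (T \ diagonal X) ⊆ relRg T := by
  refine ⟨fun h => (relDom_mono sdiff_subset).trans h, fun h x ⟨y, hxy⟩ => ?_⟩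
  by_cases hloop : x = y
  · exact ⟨x, hloop ▸ hxy⟩
  · exact h ⟨y, hxy, hloop⟩

end Relations

theorem stmt13_general {X : Type*}
    (R S : Set (X × X)) (hSR : S ⊆ R) :
    Set.Icc S R ⊆ inclFam X ↔ relDom (R \ {p : X × X | p.1 = p.2}) ⊆ relRg S := by
  refine ⟨fun hIcc x ⟨y, hxyR, hxy⟩ => ?_, fun h T ⟨hST, hTR⟩ => ?_⟩
  · have hins : insert (x, y) S ∈ inclFam X :=
      hIcc ⟨subset_insert _ _, insert_subset hxyR hSR⟩
    have hx : x ∈ insert y (relRg S) := relRg_insert (x, y) S ▸ hins ⟨y, mem_insert _ _⟩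
    exact hx.resolve_left hxy
  · rw [mem_inclFam_iff]
    calc relDom (T \ diagonal X)
      _ ⊆ relDom (R \ diagonal X) := relDom_mono (sdiff_subset_sdiff_left hTR)
      _ ⊆ relRg S := h
      _ ⊆ relRg T := relRg_mono hST

theorem stmt13 {X : Type*} [Fintype X] (hX : 2 ≤ Fintype.card X)
    (R S : Set (X × X)) (hR : R ∈ inclFam X) (hS : S ∈ inclFam X) (hSR : S ⊆ R) :
    Set.Icc S R ⊆ inclFam X ↔ relDom (R \ {p : X × X | p.1 = p.2}) ⊆ relRg S :=
  stmt13_general R S hSR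
end

section
/- Let X be a finite set with |X| = ℓ ≥ 2 and ℐ_⊆ = {R ⊆ X × X : dom(R) ⊆ rg(R)}. Then the upper dimension of ℐ_⊆ equals 2^ℓ − ℓ. -/
open Set

/-!
Every `R` with `dom R ⊆ rg R` lies below `G_B = (B × X) ∪ Δ` for `B = rg R`, or for `B = ∅` when
`rg R` is a singleton (then `R ⊆ Δ`), and the whole interval `[R, G_B]` stays in the family since
every `S ⊆ G_B` with `B ⊆ rg S` has `dom S ⊆ rg S`. Conversely, a dominating family has to assign
to each `B × B` a member `G ⊇ B × B` with `[B × B, G]` inside the family, which forces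
`G ⊆ G_B`; for non-singleton `B` this pins down `B`, so these members are pairwise distinct.
-/

namespace DominatesFam

variable {X : Type*} {𝒢 𝒜 : Set (Set X)}

theorem exists_Icc_subset (h : DominatesFam 𝒢 𝒜) {R : Set X} (hR : R ∈ 𝒜) :
    ∃ G ∈ 𝒢, R ⊆ G ∧ Icc R G ⊆ 𝒜 := by
  obtain ⟨-, 𝒟, h𝒟, hcover⟩ := h
  obtain ⟨G, hG, hRG⟩ := mem_iUnion₂.mp (hcover ▸ hR)
  obtain ⟨h𝒟𝒜, hconv, hdom, hsUnion⟩ := h𝒟 G hG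
  have hG𝒟 : G ∈ 𝒟 G := by rwa [IsDominatedFam, hsUnion] at hdom
  exact ⟨G, hG, hsUnion ▸ subset_sUnion_of_mem hRG,
    fun C hC => h𝒟𝒜 (hconv R hRG G hG𝒟 C hC.1 hC.2)⟩

end DominatesFam

section ConvexShadow

variable {X : Type*} {𝒜 : Set (Set X)} {G : Set X}

theorem self_mem_convexShadow (hG : G ∈ 𝒜) : G ∈ convexShadow 𝒜 G :=
  ⟨subset_rfl, fun _ hC => subset_antisymm hC.2 hC.1 ▸ hG⟩

theorem convexShadow_subset : convexShadow 𝒜 G ⊆ 𝒜 :=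
  fun _ hB => hB.2 ⟨subset_rfl, hB.1⟩

theorem isConvexFam_convexShadow : IsConvexFam (convexShadow 𝒜 G) :=
  fun _ hS _ hT _ hSC hCT => ⟨hCT.trans hT.1, fun _ hD => hS.2 ⟨hSC.trans hD.1, hD.2⟩⟩

theorem sUnion_convexShadow (hG : G ∈ 𝒜) : ⋃₀ convexShadow 𝒜 G = G :=
  (sUnion_subset fun _ hB => hB.1).antisymm (subset_sUnion_of_mem (self_mem_convexShadow hG))

theorem isDominatedFam_convexShadow (hG : G ∈ 𝒜) : IsDominatedFam (convexShadow 𝒜 G) := by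
  rw [IsDominatedFam, sUnion_convexShadow hG]
  exact self_mem_convexShadow hG

end ConvexShadow

theorem dominatesFam_iff {X : Type*} {𝒢 𝒜 : Set (Set X)} :
    DominatesFam 𝒢 𝒜 ↔ 𝒢 ⊆ 𝒜 ∧ ∀ R ∈ 𝒜, ∃ G ∈ 𝒢, R ⊆ G ∧ Icc R G ⊆ 𝒜 := by
  refine ⟨fun h => ⟨h.1, fun _ => h.exists_Icc_subset⟩, fun ⟨h𝒢𝒜, hcover⟩ => ?_⟩
  refine ⟨h𝒢𝒜, convexShadow 𝒜, fun G hG => ?_, ?_⟩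
  · exact ⟨convexShadow_subset, isConvexFam_convexShadow,
      isDominatedFam_convexShadow (h𝒢𝒜 hG), sUnion_convexShadow (h𝒢𝒜 hG)⟩
  · refine (iUnion₂_subset fun _ _ => convexShadow_subset).antisymm fun R hR => ?_
    obtain ⟨G, hG, hRG, hIcc⟩ := hcover R hR
    exact mem_iUnion₂.mpr ⟨G, hG, hRG, hIcc⟩

theorem upperDim_le_encard {X : Type*} {𝒢 𝒜 : Set (Set X)} (h : DominatesFam 𝒢 𝒜) :
    upperDim 𝒜 ≤ 𝒢.encard :=
  sInf_le ⟨𝒢, h, rfl⟩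

theorem le_upperDim {X : Type*} {𝒜 : Set (Set X)} {n : ℕ∞}
    (h : ∀ 𝒢, DominatesFam 𝒢 𝒜 → n ≤ 𝒢.encard) : n ≤ upperDim 𝒜 :=
  le_sInf fun _ ⟨𝒢, h𝒢, h𝒢n⟩ => h𝒢n ▸ h 𝒢 h𝒢

namespace InclFam

variable {X : Type*}

def diagUnion (B : Set X) : Set (X × X) := B ×ˢ univ ∪ {p | p.1 = p.2}

theorem mem_diagUnion {B : Set X} {p : X × X} : p ∈ diagUnion B ↔ p.1 ∈ B ∨ p.1 = p.2 := by
  simp [diagUnion]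

theorem mem_inclFam_of_subset_diagUnion {B : Set X} {S : Set (X × X)}
    (hS : S ⊆ diagUnion B) (hB : B ⊆ relRg S) : S ∈ inclFam X := by
  rintro x ⟨y, hxy⟩
  rcases mem_diagUnion.mp (hS hxy) with hx | hxy'
  · exact hB hx
  · obtain rfl : x = y := hxy'
    exact ⟨x, hxy⟩

theorem diagUnion_mem_inclFam (B : Set X) : diagUnion B ∈ inclFam X :=
  mem_inclFam_of_subset_diagUnion subset_rfl fun b _ => ⟨b, mem_diagUnion.mpr (Or.inr rfl)⟩

theorem exists_nonsingleton_Icc_diagUnion {R : Set (X × X)} (hR : R ∈ inclFam X) :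
    ∃ B ∈ (range (singleton : X → Set X))ᶜ,
      R ⊆ diagUnion B ∧ Icc R (diagUnion B) ⊆ inclFam X := by
  by_cases hsingle : relRg R ∈ range (singleton : X → Set X)
  · obtain ⟨b, hb⟩ := hsingle
    refine ⟨∅, fun ⟨x, hx⟩ => singleton_ne_empty x hx, ?_, fun S hS =>
      mem_inclFam_of_subset_diagUnion hS.2 (empty_subset _)⟩
    rintro ⟨x, y⟩ hxy
    have hx : x ∈ ({b} : Set X) := hb ▸ hR ⟨y, hxy⟩
    have hy : y ∈ ({b} : Set X) := hb ▸ ⟨x, hxy⟩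
    exact mem_diagUnion.mpr (Or.inr (hx.trans hy.symm))
  · refine ⟨relRg R, hsingle, fun ⟨x, y⟩ hxy => mem_diagUnion.mpr (Or.inl (hR ⟨y, hxy⟩)),
      fun S hS => mem_inclFam_of_subset_diagUnion hS.2 ?_⟩
    rintro y ⟨x, hxy⟩
    exact ⟨x, hS.1 hxy⟩

theorem prod_self_mem_inclFam (B : Set X) : B ×ˢ B ∈ inclFam X :=
  fun _ ⟨y, hxy⟩ => ⟨y, hxy.2, hxy.1⟩

theorem subset_diagUnion_of_Icc_subset {B : Set X} {G : Set (X × X)}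
    (hIcc : Icc (B ×ˢ B) G ⊆ inclFam X) (hBG : B ×ˢ B ⊆ G) : G ⊆ diagUnion B := by
  rintro ⟨x, y⟩ hxy
  -- `x` enters the domain of `insert (x, y) (B ×ˢ B)`, so it must enter the range too
  have hS : insert (x, y) (B ×ˢ B) ∈ inclFam X :=
    hIcc ⟨subset_insert _ _, insert_subset hxy hBG⟩
  obtain ⟨z, hz⟩ := hS ⟨y, mem_insert _ _⟩
  rcases hz with hzx | hzx
  · exact mem_diagUnion.mpr (Or.inr (Prod.ext_iff.mp hzx).2)
  · exact mem_diagUnion.mpr (Or.inl hzx.2)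

theorem subset_of_prod_self_subset_diagUnion {B B' : Set X}
    (hB : B ∈ (range (singleton : X → Set X))ᶜ) (h : B ×ˢ B ⊆ diagUnion B') : B ⊆ B' := by
  intro b hb
  have hBnt : B.Nontrivial := (nontrivial_iff_ne_singleton hb).mpr fun h => hB ⟨b, h.symm⟩
  obtain ⟨c, hc, hcb⟩ := hBnt.exists_ne b
  rcases mem_diagUnion.mp (h (mk_mem_prod hb hc)) with hb' | hbc
  · exact hb'
  · exact absurd hbc.symm hcb

end InclFam

open InclFam in
theorem upperDim_inclFam (X : Type*) :
    upperDim (inclFam X) = (range (singleton : X → Set X))ᶜ.encard := by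
  apply le_antisymm
  · refine (upperDim_le_encard (dominatesFam_iff.mpr ⟨?_, fun R hR => ?_⟩)).trans
      (encard_image_le diagUnion _)
    · rintro _ ⟨B, -, rfl⟩
      exact diagUnion_mem_inclFam B
    · obtain ⟨B, hB, hRB, hIcc⟩ := exists_nonsingleton_Icc_diagUnion hR
      exact ⟨diagUnion B, mem_image_of_mem _ hB, hRB, hIcc⟩
  · refine le_upperDim fun 𝒢 h𝒢 => ?_
    choose G hG𝒢 hBG hIcc using fun B : Set X => h𝒢.exists_Icc_subset (prod_self_mem_inclFam B)
    have hG : ∀ B, G B ⊆ diagUnion B := fun B => subset_diagUnion_of_Icc_subset (hIcc B) (hBG B)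
    have hsub : ∀ B ∈ (range (singleton : X → Set X))ᶜ, ∀ B', G B = G B' → B ⊆ B' :=
      fun B hB B' h => subset_of_prod_self_subset_diagUnion hB <| (hBG B).trans <| h ▸ hG B'
    exact encard_le_encard_of_injOn (fun B _ => hG𝒢 B) fun B hB B' hB' h =>
      (hsub B hB B' h).antisymm (hsub B' hB' B h.symm)

theorem encard_compl_range_singleton (X : Type*) [Fintype X] :
    (range (singleton : X → Set X))ᶜ.encard = ((2 ^ Fintype.card X - Fintype.card X : ℕ) : ℕ∞) := by
  rw [← (toFinite _).cast_ncard_eq, ncard_compl, ncard_range_of_injective singleton_injective,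
    Nat.card_eq_fintype_card, Fintype.card_set, Nat.card_eq_fintype_card]

theorem stmt14_general {X : Type*} [Fintype X] :
    upperDim (inclFam X) = ((2 ^ Fintype.card X - Fintype.card X : ℕ) : ℕ∞) := by
  rw [upperDim_inclFam, encard_compl_range_singleton]

theorem stmt14 {X : Type*} [Fintype X] (hX : 2 ≤ Fintype.card X) :
    upperDim (inclFam X) = ((2 ^ Fintype.card X - Fintype.card X : ℕ) : ℕ∞) :=
  stmt14_general
end
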